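/- (Constant function as a quadratic form in harmonic polynomials.) Let n ≥ 1 and let p₁,…,p_m ∈ ℝ[x₁,x₂,x₃] be polynomials, each homogeneous of degree n with Δpⱼ = 0, such that every polynomial that is homogeneous of degree n and harmonic is an ℝ-linear combination of p₁,…,p_m. Then (x₁² + x₂² + x₃²)^n lies in the ℝ-linear span of the products {pᵢ·pⱼ : 1 ≤ i ≤ j ≤ m}. -/

import Mathlib

/-!
For `t ∈ ℂ` the linear form `Q(t) = (x₁ + i x₂) + 2 x₃ t - (x₁ - i x₂) t²` has an isotropic
coefficient vector, so `Q(t)ⁿ` is harmonic; hence every coefficient `F_k` of `Qⁿ`, viewed as a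
polynomial in `t`, is a complex harmonic polynomial, i.e. a complex combination of the `pᵢ`.

For a polynomial `f` of degree `≤ 2n` the quantity `∑ₖ (-1)ᵏ k! (2n-k)! f_k f_{2n-k}` does not
change under `t ↦ t + s`, because it is the value at `0` of `∑ₖ (-1)ᵏ f⁽ᵏ⁾ f⁽²ⁿ⁻ᵏ⁾`, whose
derivative telescopes to zero. Moving a root of a quadratic `q` to `0` then shows that for `f = qⁿ`
it equals `(-1)ⁿ (n!)² disc(q)ⁿ`. As `disc Q = 4 (x₁² + x₂² + x₃²)`, this writes
`(x₁² + x₂² + x₃²)ⁿ` as a quadratic expression in the `F_k`, and taking real parts of coefficients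
gives the real statement.
-/

open MvPolynomial

/-- The Laplace operator on `ℝ[x₁,x₂,x₃]`. -/
noncomputable def lap (p : MvPolynomial (Fin 3) ℝ) : MvPolynomial (Fin 3) ℝ :=
  pderiv 0 (pderiv 0 p) + pderiv 1 (pderiv 1 p) + pderiv 2 (pderiv 2 p)

open Finset
open scoped Nat

namespace Polynomial

section Transvectant

variable {R S : Type*} [CommRing R] [CommRing S]

/-- Up to normalisation, the `2n`-th transvectant of `p` with itself, `p` read as a binary form
of degree `2n`. -/
def transvectant (n : ℕ) (p : R[X]) : R :=
  ∑ k ∈ range (2 * n + 1), ((-1) ^ k * (k ! * (2 * n - k)!) : ℤ) • (p.coeff k * p.coeff (2 * n - k))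

noncomputable def transvectantPoly (n : ℕ) (p : R[X]) : R[X] :=
  ∑ k ∈ range (2 * n + 1), (-1) ^ k * (derivative^[k] p * derivative^[2 * n - k] p)

lemma transvectant_map (f : R →+* S) (n : ℕ) (p : R[X]) :
    transvectant n (p.map f) = f (transvectant n p) := by
  simp [transvectant, map_sum]

lemma eval_zero_transvectantPoly (n : ℕ) (p : R[X]) :
    (transvectantPoly n p).eval 0 = transvectant n p := by
  simp only [transvectantPoly, transvectant, eval_finsetSum, eval_mul, eval_pow, eval_neg, eval_one,
    ← coeff_zero_eq_eval_zero, coeff_iterate_derivative, zero_add, Nat.descFactorial_self,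
    nsmul_eq_mul, zsmul_eq_mul]
  refine sum_congr rfl fun k _ => ?_
  push_cast
  ring

lemma derivative_taylor (r : R) (p : R[X]) :
    derivative (taylor r p) = taylor r (derivative p) := by
  simp [taylor_apply, derivative_comp]

lemma iterate_derivative_taylor (r : R) (p : R[X]) (k : ℕ) :
    derivative^[k] (taylor r p) = taylor r (derivative^[k] p) :=
  Function.Commute.iterate_left (derivative_taylor r) k p

lemma transvectantPoly_taylor (n : ℕ) (r : R) (p : R[X]) :
    transvectantPoly n (taylor r p) = taylor r (transvectantPoly n p) := by
  simp [transvectantPoly, iterate_derivative_taylor, taylor_mul]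

lemma derivative_transvectantPoly {n : ℕ} {p : R[X]} (hp : p.natDegree ≤ 2 * n) :
    derivative (transvectantPoly n p) = 0 := by
  set f : ℕ → R[X] := fun k => (-1) ^ k * (derivative^[k] p * derivative^[2 * n + 1 - k] p)
  have hterm : ∀ k ∈ range (2 * n + 1), derivative ((-1) ^ k * (derivative^[k] p *
      derivative^[2 * n - k] p)) = f k - f (k + 1) := by
    intro k hk
    have hk : k ≤ 2 * n := by simpa [Nat.lt_succ_iff] using hk
    simp only [f, derivative_mul, derivative_pow, derivative_neg, derivative_one, neg_zero,
      mul_zero, zero_mul, zero_add, ← Function.iterate_succ_apply' derivative]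
    rw [show 2 * n + 1 - k = (2 * n - k).succ by omega,
      show 2 * n + 1 - (k + 1) = 2 * n - k by omega]
    ring
  have hlast : derivative^[2 * n + 1] p = 0 := iterate_derivative_eq_zero (by omega)
  rw [transvectantPoly, derivative_sum, sum_congr rfl hterm, sum_range_sub']
  simp [f, hlast]

lemma transvectant_taylor [IsAddTorsionFree R] {n : ℕ} {p : R[X]} (hp : p.natDegree ≤ 2 * n)
    (r : R) : transvectant n (taylor r p) = transvectant n p := by
  have hconst := eq_C_of_derivative_eq_zero (derivative_transvectantPoly hp)
  rw [← eval_zero_transvectantPoly, ← eval_zero_transvectantPoly n p, transvectantPoly_taylor,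
    hconst]
  simp

lemma transvectant_X_pow_mul (n : ℕ) (h : R[X]) :
    transvectant n (X ^ n * h) = ((-1) ^ n * n ! ^ 2 : ℤ) • h.coeff 0 ^ 2 := by
  rw [transvectant, sum_eq_single_of_mem n (by simp; omega)]
  · simp [coeff_X_pow_mul', show 2 * n - n = n by omega, sq]
  · intro k hk hkn
    have hk : k < 2 * n + 1 := mem_range.1 hk
    rcases Nat.lt_or_gt_of_ne hkn with hkn | hkn
    · simp [coeff_X_pow_mul', show ¬ n ≤ k by omega]
    · simp [coeff_X_pow_mul', show ¬ n ≤ 2 * n - k by omega]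

lemma transvectant_C {n : ℕ} (hn : n ≠ 0) (a : R) : transvectant n (C a) = 0 := by
  refine sum_eq_zero fun k hk => ?_
  simp only [coeff_C]
  split_ifs <;> first | omega | simp

lemma natDegree_quadratic_pow_le (a b c : R) (n : ℕ) :
    ((C a + C b * X + C c * X ^ 2) ^ n).natDegree ≤ 2 * n := by
  have hq : (C a + C b * X + C c * X ^ 2).natDegree ≤ 2 := by compute_degree
  exact natDegree_pow_le.trans (by nlinarith)

theorem transvectant_quadratic_pow_of_isAlgClosed {K : Type*} [Field K] [IsAlgClosed K]
    [CharZero K] (n : ℕ) (a b c : K) :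
    transvectant n ((C a + C b * X + C c * X ^ 2) ^ n) =
      ((-1) ^ n * n ! ^ 2 : ℤ) • (b ^ 2 - 4 * a * c) ^ n := by
  set q : K[X] := C a + C b * X + C c * X ^ 2 with hq_def
  by_cases hq : q.degree = 0
  · have hb : b = 0 := by
      simpa [hq_def] using coeff_eq_zero_of_degree_lt (p := q) (n := 1) (by rw [hq]; norm_num)
    have hc : c = 0 := by
      simpa [hq_def] using coeff_eq_zero_of_degree_lt (p := q) (n := 2) (by rw [hq]; norm_num)
    rcases eq_or_ne n 0 with rfl | hn
    · simp [transvectant]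
    · rw [hq_def, hb, hc]
      simp only [map_zero, zero_mul, add_zero]
      rw [← C_pow, transvectant_C hn]
      simp [zero_pow hn]
  obtain ⟨t, ht⟩ := IsAlgClosed.exists_root q hq
  have hroot : a + b * t + c * t ^ 2 = 0 := by simpa [q] using ht
  have hshift : taylor t q = X * (C (b + 2 * c * t) + C c * X) := by
    have h := congrArg C hroot
    simp only [map_add, map_mul, map_pow, map_zero] at h
    simp only [q, taylor_apply, mul_comp, C_comp, X_comp, pow_comp, map_add, map_mul, map_ofNat]
    linear_combination h
  calc transvectant n (q ^ n) = transvectant n (taylor t (q ^ n)) :=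
        (transvectant_taylor (natDegree_quadratic_pow_le a b c n) t).symm
    _ = transvectant n (X ^ n * (C (b + 2 * c * t) + C c * X) ^ n) := by
        rw [taylor_pow, hshift, mul_pow]
    _ = ((-1) ^ n * n ! ^ 2 : ℤ) • ((b + 2 * c * t) ^ 2) ^ n := by
        rw [transvectant_X_pow_mul, coeff_zero_eq_eval_zero]
        simp only [eval_pow, eval_add, eval_C, eval_mul, eval_X, mul_zero, add_zero]
        rw [← pow_mul, ← pow_mul, mul_comm n 2]
    _ = ((-1) ^ n * n ! ^ 2 : ℤ) • (b ^ 2 - 4 * a * c) ^ n := by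
        congr 2
        linear_combination (4 * c) * hroot

lemma map_transvectant_quadratic_pow (f : R →+* S) (n : ℕ) (a b c : R) :
    f (transvectant n ((C a + C b * X + C c * X ^ 2) ^ n)) =
      transvectant n ((C (f a) + C (f b) * X + C (f c) * X ^ 2) ^ n) := by
  simp [← transvectant_map, Polynomial.map_pow]

theorem transvectant_quadratic_pow (n : ℕ) (a b c : R) :
    transvectant n ((C a + C b * X + C c * X ^ 2) ^ n) =
      ((-1) ^ n * n ! ^ 2 : ℤ) • (b ^ 2 - 4 * a * c) ^ n := by
  -- It suffices to prove the identity in `ℤ[a, b, c]`, where it can be checked at complex points.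
  let A : Fin 3 → MvPolynomial (Fin 3) ℤ := MvPolynomial.X
  have generic : transvectant n ((C (A 0) + C (A 1) * X + C (A 2) * X ^ 2) ^ n) =
      ((-1) ^ n * n ! ^ 2 : ℤ) • (A 1 ^ 2 - 4 * A 0 * A 2) ^ n := by
    refine MvPolynomial.funext fun x => Int.cast_injective (α := ℂ) ?_
    let ψ := (Int.castRingHom ℂ).comp (MvPolynomial.eval x)
    change ψ _ = ψ _
    rw [map_transvectant_quadratic_pow, transvectant_quadratic_pow_of_isAlgClosed]
    simp [ψ, A]
  have := congrArg (MvPolynomial.eval₂Hom (Int.castRingHom R) ![a, b, c]) generic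
  rw [map_transvectant_quadratic_pow] at this
  simpa [A] using this

end Transvectant

theorem coeff_mem_of_forall_eval_mem {K A : Type*} [Field K] [Infinite K] [CommRing A]
    [Algebra K A] {M : Submodule K A} {P : A[X]}
    (hP : ∀ t : K, P.eval (algebraMap K A t) ∈ M) (k : ℕ) : P.coeff k ∈ M := by
  -- A functional killing `M` but not `P.coeff k` would turn `P` into a nonzero scalar
  -- polynomial vanishing on all of `K`.
  by_contra hk
  obtain ⟨f, hfk, hfM⟩ := M.exists_dual_map_eq_bot_of_notMem hk inferInstance
  have hf : ∀ x ∈ M, f x = 0 := fun x hx => by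
    simpa [hfM] using Submodule.mem_map_of_mem (f := f) hx
  have hkdeg : k ≤ P.natDegree := by
    by_contra! hlt
    exact hk (by simp [coeff_eq_zero_of_natDegree_lt hlt])
  let Q : K[X] := ∑ i ∈ range (P.natDegree + 1), C (f (P.coeff i)) * X ^ i
  have hQ : Q = 0 := by
    refine Polynomial.funext fun t => ?_
    rw [eval_zero, ← hf _ (hP t), eval_eq_sum_range (p := P)]
    simp only [Q, eval_finsetSum, map_sum, eval_mul, eval_C, eval_pow, eval_X, ← map_pow,
      ← Algebra.commutes, ← Algebra.smul_def, map_smul, smul_eq_mul]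
    exact sum_congr rfl fun i _ => mul_comm _ _
  apply hfk
  simpa [Q, finsetSum_coeff, coeff_C_mul_X_pow, Nat.lt_succ_iff.2 hkdeg] using
    congrArg (coeff · k) hQ

end Polynomial

namespace MvPolynomial

variable {σ : Type*}

section Laplacian

variable [Fintype σ] {R : Type*} [CommSemiring R]

noncomputable def laplacian : MvPolynomial σ R →ₗ[R] MvPolynomial σ R :=
  ∑ i, (pderiv i).toLinearMap ∘ₗ (pderiv i).toLinearMap

lemma laplacian_apply (p : MvPolynomial σ R) : laplacian p = ∑ i, pderiv i (pderiv i p) := by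
  simp [laplacian]

variable (σ R) in
noncomputable def harmonicSubmodule (n : ℕ) : Submodule R (MvPolynomial σ R) :=
  homogeneousSubmodule σ R n ⊓ LinearMap.ker laplacian

lemma laplacian_linearForm_pow {a : σ → R} (ha : ∑ i, a i ^ 2 = 0) (n : ℕ) :
    laplacian ((∑ i, C (a i) * X i) ^ n) = 0 := by
  classical
  set ℓ : MvPolynomial σ R := ∑ i, C (a i) * X i
  have hℓ : ∀ i, pderiv i ℓ = C (a i) := fun i => by
    simp [ℓ, map_sum, pderiv_X, Pi.single_apply]
  have h2 : ∀ i, pderiv i (pderiv i (ℓ ^ n)) =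
      ((n * (n - 1) : ℕ) : MvPolynomial σ R) * ℓ ^ (n - 2) * C (a i ^ 2) := fun i => by
    rw [pderiv_pow, hℓ, Derivation.leibniz, pderiv_C, Derivation.leibniz, Derivation.leibniz_pow,
      hℓ, Derivation.map_natCast]
    simp only [smul_eq_mul, nsmul_eq_mul, mul_zero, add_zero, Nat.sub_sub, Nat.cast_mul, C_pow]
    ring
  simp only [laplacian_apply, h2, ← mul_sum, ← map_sum, ha, map_zero, mul_zero]

lemma linearForm_pow_mem_harmonicSubmodule {a : σ → R} (ha : ∑ i, a i ^ 2 = 0) (n : ℕ) :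
    (∑ i, C (a i) * X i) ^ n ∈ harmonicSubmodule σ R n := by
  refine ⟨(mem_homogeneousSubmodule _ _).2 ?_, laplacian_linearForm_pow ha n⟩
  simpa using (IsHomogeneous.sum _ _ 1 fun i _ => isHomogeneous_C_mul_X (a i) i).pow n

end Laplacian

section AddMonoidAlgebraMap

variable {R S : Type*} [CommSemiring R] [CommSemiring S]

lemma pderiv_addMonoidAlgebraMap (g : R →+ S) (i : σ) (p : MvPolynomial σ R) :
    pderiv i (AddMonoidAlgebra.map g p : MvPolynomial σ S) =
      AddMonoidAlgebra.map g (pderiv i p) := by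
  ext m
  simp only [coeff_pderiv, coeff_addMonoidAlgebraMap, ← Nat.cast_succ, mul_comm _ (_ : ℕ).cast,
    ← nsmul_eq_mul, map_nsmul]

lemma IsHomogeneous.addMonoidAlgebraMap (g : R →+ S) {p : MvPolynomial σ R} {n : ℕ}
    (hp : p.IsHomogeneous n) : IsHomogeneous (AddMonoidAlgebra.map g p : MvPolynomial σ S) n :=
  fun d hd => hp fun h => hd (by simp [h])

variable [Fintype σ]

lemma laplacian_addMonoidAlgebraMap (g : R →+ S) (p : MvPolynomial σ R) :
    laplacian (AddMonoidAlgebra.map g p : MvPolynomial σ S) =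
      AddMonoidAlgebra.map g (laplacian p) := by
  simp [laplacian_apply, pderiv_addMonoidAlgebraMap, AddMonoidAlgebra.map_sum]

lemma addMonoidAlgebraMap_mem_harmonicSubmodule (g : R →+ S) {p : MvPolynomial σ R} {n : ℕ}
    (hp : p ∈ harmonicSubmodule σ R n) :
    (AddMonoidAlgebra.map g p : MvPolynomial σ S) ∈ harmonicSubmodule σ S n :=
  ⟨(mem_homogeneousSubmodule _ _).2 (hp.1.addMonoidAlgebraMap g),
    by simp [laplacian_addMonoidAlgebraMap, LinearMap.mem_ker.1 hp.2]⟩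

end AddMonoidAlgebraMap

section Complexification

open Complex

noncomputable def complexification (V : Submodule ℝ (MvPolynomial σ ℝ)) :
    Submodule ℂ (MvPolynomial σ ℂ) :=
  Submodule.span ℂ (map ofRealHom '' V)

lemma map_ofReal_re_add_I_smul_map_ofReal_im (f : MvPolynomial σ ℂ) :
    map ofRealHom (AddMonoidAlgebra.map reAddGroupHom f) +
      I • map ofRealHom (AddMonoidAlgebra.map imAddGroupHom f) = f := by
  ext d
  simp [coeff_map, mul_comm I]

lemma mem_of_map_ofReal_mem_complexification {V : Submodule ℝ (MvPolynomial σ ℝ)}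
    {f : MvPolynomial σ ℝ} (hf : map ofRealHom f ∈ complexification V) : f ∈ V := by
  let re := (AddMonoidAlgebra.map reAddGroupHom : MvPolynomial σ ℂ → MvPolynomial σ ℝ)
  let im := (AddMonoidAlgebra.map imAddGroupHom : MvPolynomial σ ℂ → MvPolynomial σ ℝ)
  have key : ∀ g ∈ complexification V, re g ∈ V ∧ im g ∈ V := by
    intro g hg
    induction hg using Submodule.span_induction with
    | mem g hg =>
      obtain ⟨v, hv, rfl⟩ := hg
      have hre : re (map ofRealHom v) = v := by ext; simp [re, coeff_map]
      have him : im (map ofRealHom v) = 0 := by ext; simp [im, coeff_map]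
      rw [hre, him]
      exact ⟨hv, V.zero_mem⟩
    | zero => simp [re, im]
    | add g h _ _ hg hh =>
      simpa [re, im, AddMonoidAlgebra.map_add] using ⟨V.add_mem hg.1 hh.1, V.add_mem hg.2 hh.2⟩
    | smul c g _ hg =>
      have hre : re (c • g) = c.re • re g - c.im • im g := by ext; simp [re, im]
      have him : im (c • g) = c.re • im g + c.im • re g := by ext; simp [re, im]
      rw [hre, him]
      exact ⟨V.sub_mem (V.smul_mem _ hg.1) (V.smul_mem _ hg.2),
        V.add_mem (V.smul_mem _ hg.2) (V.smul_mem _ hg.1)⟩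
  have hre : re (map ofRealHom f) = f := by ext; simp [re, coeff_map]
  simpa [hre] using (key _ hf).1

lemma complexification_mul_le (V W : Submodule ℝ (MvPolynomial σ ℝ)) :
    complexification V * complexification W ≤ complexification (V * W) := by
  rw [complexification, complexification, Submodule.span_mul_span, ← Set.image_mul]
  exact Submodule.span_mono (Set.image_mono (Set.mul_subset_iff.2 fun v hv w hw =>
    Submodule.mul_mem_mul hv hw))

lemma harmonicSubmodule_le_complexification [Fintype σ] {n : ℕ}
    {V : Submodule ℝ (MvPolynomial σ ℝ)} (hV : harmonicSubmodule σ ℝ n ≤ V) :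
    harmonicSubmodule σ ℂ n ≤ complexification V := by
  intro f hf
  have hmem : ∀ g : ℂ →+ ℝ, map ofRealHom (AddMonoidAlgebra.map g f) ∈ complexification V :=
    fun g => Submodule.subset_span ⟨_, hV (addMonoidAlgebraMap_mem_harmonicSubmodule g hf), rfl⟩
  rw [← map_ofReal_re_add_I_smul_map_ofReal_im f]
  exact add_mem (hmem _) (Submodule.smul_mem _ _ (hmem _))

end Complexification

end MvPolynomial

lemma Submodule.span_range_mul_span_range_le {ι R A : Type*} [LinearOrder ι] [CommSemiring R]
    [CommSemiring A] [Algebra R A] (p : ι → A) :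
    span R (Set.range p) * span R (Set.range p) ≤
      span R {r | ∃ i j, i ≤ j ∧ r = p i * p j} := by
  rw [span_mul_span]
  refine span_mono ?_
  rintro _ ⟨_, ⟨i, rfl⟩, _, ⟨j, rfl⟩, rfl⟩
  rcases le_total i j with h | h
  · exact ⟨i, j, h, rfl⟩
  · exact ⟨j, i, h, mul_comm _ _⟩

section IsotropicPencil

open Complex

noncomputable def isotropicPencil : Polynomial (MvPolynomial (Fin 3) ℂ) :=
  Polynomial.C (X 0 + C I * X 1) + Polynomial.C (2 * X 2) * Polynomial.X +
    Polynomial.C (-(X 0 - C I * X 1)) * Polynomial.X ^ 2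

lemma isotropicPencil_eval (t : ℂ) :
    isotropicPencil.eval (algebraMap ℂ _ t) =
      ∑ i, C (![1 - t ^ 2, I * (1 + t ^ 2), 2 * t] i) * X i := by
  simp only [isotropicPencil, algebraMap_eq, Polynomial.eval_add, Polynomial.eval_mul,
    Polynomial.eval_pow, Polynomial.eval_C, Polynomial.eval_X, Polynomial.eval_ofNat,
    Fin.sum_univ_three, Matrix.cons_val, map_sub, map_add, map_mul, map_pow, map_one, map_ofNat]
  ring

lemma coeff_isotropicPencil_pow_mem_harmonicSubmodule (n k : ℕ) :
    (isotropicPencil ^ n).coeff k ∈ harmonicSubmodule (Fin 3) ℂ n := by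
  refine Polynomial.coeff_mem_of_forall_eval_mem (fun t => ?_) k
  rw [Polynomial.eval_pow, isotropicPencil_eval]
  refine linearForm_pow_mem_harmonicSubmodule ?_ n
  simp only [Fin.sum_univ_three, Matrix.cons_val]
  linear_combination (1 + t ^ 2) ^ 2 * I_sq

theorem sum_sq_pow_mem_mul_of_harmonicSubmodule_le {n : ℕ}
    {W : Submodule ℂ (MvPolynomial (Fin 3) ℂ)} (hW : harmonicSubmodule (Fin 3) ℂ n ≤ W) :
    (X 0 ^ 2 + X 1 ^ 2 + X 2 ^ 2 : MvPolynomial (Fin 3) ℂ) ^ n ∈ W * W := by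
  have hF : ∀ k, (isotropicPencil ^ n).coeff k ∈ W :=
    fun k => hW (coeff_isotropicPencil_pow_mem_harmonicSubmodule n k)
  have hT : Polynomial.transvectant n (isotropicPencil ^ n) ∈ W * W :=
    sum_mem fun k _ => zsmul_mem (Submodule.mul_mem_mul (hF _) (hF _)) _
  have hdisc : (2 * X 2) ^ 2 - 4 * (X 0 + C I * X 1) * -(X 0 - C I * X 1) =
      4 * (X 0 ^ 2 + X 1 ^ 2 + X 2 ^ 2 : MvPolynomial (Fin 3) ℂ) := by
    have hI : (C I : MvPolynomial (Fin 3) ℂ) ^ 2 = -1 := by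
      rw [← map_pow, I_sq, map_neg, map_one]
    linear_combination (-4 * X 1 ^ 2 : MvPolynomial (Fin 3) ℂ) * hI
  have hT' : Polynomial.transvectant n (isotropicPencil ^ n) =
      ((-1) ^ n * n ! ^ 2 * 4 ^ n : ℤ) • (X 0 ^ 2 + X 1 ^ 2 + X 2 ^ 2) ^ n := by
    rw [isotropicPencil, Polynomial.transvectant_quadratic_pow, hdisc, mul_pow]
    simp only [zsmul_eq_mul]
    push_cast
    ring
  rwa [hT', ← Int.cast_smul_eq_zsmul ℂ, Submodule.smul_mem_iff _ (by positivity)] at hT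

end IsotropicPencil

lemma lap_eq_laplacian (p : MvPolynomial (Fin 3) ℝ) : lap p = laplacian p := by
  simp [lap, laplacian_apply, Fin.sum_univ_three]

theorem const_as_quadratic_form_general (n : ℕ) (m : ℕ)
    (p : Fin m → MvPolynomial (Fin 3) ℝ)
    (hspan : ∀ q : MvPolynomial (Fin 3) ℝ, q.IsHomogeneous n → lap q = 0 →
      q ∈ Submodule.span ℝ (Set.range p)) :
    (X 0 ^ 2 + X 1 ^ 2 + X 2 ^ 2 : MvPolynomial (Fin 3) ℝ) ^ n ∈
      Submodule.span ℝ {r : MvPolynomial (Fin 3) ℝ | ∃ i j : Fin m, i ≤ j ∧ r = p i * p j} := by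
  set V := Submodule.span ℝ (Set.range p)
  have hV : harmonicSubmodule (Fin 3) ℝ n ≤ V := fun q hq =>
    hspan q hq.1 (by rw [lap_eq_laplacian]; exact hq.2)
  have hC := sum_sq_pow_mem_mul_of_harmonicSubmodule_le (harmonicSubmodule_le_complexification hV)
  have hR : (X 0 ^ 2 + X 1 ^ 2 + X 2 ^ 2 : MvPolynomial (Fin 3) ℝ) ^ n ∈ V * V :=
    mem_of_map_ofReal_mem_complexification (complexification_mul_le V V (by simpa using hC))
  exact Submodule.span_range_mul_span_range_le p hR

/-- If `p₁, …, p_m` is a spanning family of the harmonic homogeneous polynomials of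
degree `n`, then `‖x‖^{2n}` is a linear combination of the products `pᵢ·pⱼ`, `i ≤ j`. -/
theorem const_as_quadratic_form (n : ℕ) (hn : 1 ≤ n) (m : ℕ)
    (p : Fin m → MvPolynomial (Fin 3) ℝ)
    (hhom : ∀ i, (p i).IsHomogeneous n) (hharm : ∀ i, lap (p i) = 0)
    (hspan : ∀ q : MvPolynomial (Fin 3) ℝ, q.IsHomogeneous n → lap q = 0 →
      q ∈ Submodule.span ℝ (Set.range p)) :
    (X 0 ^ 2 + X 1 ^ 2 + X 2 ^ 2 : MvPolynomial (Fin 3) ℝ) ^ n ∈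
      Submodule.span ℝ {r : MvPolynomial (Fin 3) ℝ | ∃ i j : Fin m, i ≤ j ∧ r = p i * p j} :=
  const_as_quadratic_form_general n m p hspan
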